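/- For every θ with 0 ≤ θ ≤ 1/(√2 + 1/(√2·d)), the function m satisfies the lower bound m(θ) ≥ 4p(1−p)·( 1 − 4θ²/(1−θ²/d)² )·θ. -/

import Mathlib

open MeasureTheory Real Set
open scoped ENNReal

noncomputable section

namespace OMDA

/-- `t_p(x)`. -/
def tp (p x : ℝ) : ℝ :=
  (p * Real.exp x - (1 - p) * Real.exp (-x)) / (p * Real.exp x + (1 - p) * Real.exp (-x))

/-- `c_p(x)`. -/
def cp (p x : ℝ) : ℝ := p * Real.exp x + (1 - p) * Real.exp (-x)

/-- The standard normal density on `ℝ`. -/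
def phi1 (z : ℝ) : ℝ := Real.exp (-z ^ 2 / 2) / Real.sqrt (2 * π)

/-- Expectation of `g Z` for `Z ∼ N(0,1)`. -/
def gexp (g : ℝ → ℝ) : ℝ := ∫ z : ℝ, g z * phi1 z

/-- The univariate population EM map `m(θ)`. -/
def m (p : ℝ) (d : ℕ) (θ : ℝ) : ℝ :=
  gexp fun z => tp p (θ * z / (1 - θ ^ 2 / d)) * z

/-- The radial negative population log-likelihood `ℓ(θ)`. -/
def ell (p : ℝ) (d : ℕ) (θ : ℝ) : ℝ :=
  (d / 2 : ℝ) * Real.log (2 * π * (1 - θ ^ 2 / d)) + ((d : ℝ) + θ ^ 2) / (2 * (1 - θ ^ 2 / d))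
    - gexp fun z => Real.log (cp p (θ * z / (1 - θ ^ 2 / d)))

/-- `q := 1 - (2p-1)²/2`. -/
def qp (p : ℝ) : ℝ := 1 - (2 * p - 1) ^ 2 / 2

/-- The initialization radius `√(d·(2+q−√(8q+q²))/2)`. -/
def θmax (p : ℝ) (d : ℕ) : ℝ :=
  Real.sqrt ((d : ℝ) * (2 + qp p - Real.sqrt (8 * qp p + qp p ^ 2)) / 2)

/-- `ρ := (1+θ₀²/d)/(1−θ₀²/d)² · (1 − (2p−1)²/2)`. -/
def ρc (p : ℝ) (d : ℕ) (θ0 : ℝ) : ℝ :=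
  (1 + θ0 ^ 2 / d) / (1 - θ0 ^ 2 / d) ^ 2 * (1 - (2 * p - 1) ^ 2 / 2)

/-- `ℝᵈ` with the Euclidean norm. -/
abbrev E (d : ℕ) := EuclideanSpace ℝ (Fin d)

/-- Density of `N(ν, σ²·I_d)` on `ℝᵈ`. -/
def gpdf (d : ℕ) (ν : E d) (σ2 : ℝ) (x : E d) : ℝ :=
  (2 * π * σ2) ^ (-(d : ℝ) / 2) * Real.exp (-‖x - ν‖ ^ 2 / (2 * σ2))

/-- Density of the mixture `(1−p)·N(ν−θ, σ²I) + p·N(ν+θ, σ²I)`. -/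
def mixPdf (p : ℝ) (d : ℕ) (ν θ : E d) (σ2 : ℝ) (x : E d) : ℝ :=
  (1 - p) * gpdf d (ν - θ) σ2 x + p * gpdf d (ν + θ) σ2 x

/-- The population EM operator `M(θ)`. -/
def Mop (p : ℝ) (d : ℕ) (θ : E d) : E d :=
  ∫ z : E d, (gpdf d 0 1 z * tp p ((inner ℝ θ z : ℝ) / (1 - ‖θ‖ ^ 2 / d))) • z

/-- KL divergence `D_KL[N(0,I_d) ∥ G(θ, σ²)]`, written via densities. -/
def klStd (p : ℝ) (d : ℕ) (θ : E d) (σ2 : ℝ) : ℝ :=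
  ∫ z : E d, gpdf d 0 1 z * Real.log (gpdf d 0 1 z / mixPdf p d 0 θ σ2 z)

/-- The standard normal cdf `Φ`. -/
def stdNormCdf (x : ℝ) : ℝ := ∫ z in Iic x, phi1 z

/-- Misclassification probability of a classifier `h` under the distribution `D`
with class-conditional laws `N(±μ, I_d)` and balanced classes. -/
def errProb (d : ℕ) (μ : E d) (h : E d → ℝ) : ℝ :=
  (1 / 2) * (∫ x in {x | h x ≠ 1}, gpdf d μ 1 x)
    + (1 / 2) * (∫ x in {x | h x ≠ -1}, gpdf d (-μ) 1 x)

/-- The measure `N(ν, I_d)` on `ℝᵈ`, via its density. -/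
def gaussMeasure (d : ℕ) (ν : E d) : Measure (E d) :=
  volume.withDensity fun x => ENNReal.ofReal (gpdf d ν 1 x)

/-- The standard Gaussian measure `N(0, I_d)`. -/
def stdGaussMeasure (d : ℕ) : Measure (E d) := gaussMeasure d 0

/-- The joint distribution `D` of `(X, Y)` on `ℝᵈ × ℝ`. -/
def Dmeas (d : ℕ) (μ : E d) : Measure (E d × ℝ) :=
  (1 / 2 : ℝ≥0∞) • ((gaussMeasure d μ).prod (Measure.dirac (1 : ℝ)))
    + (1 / 2 : ℝ≥0∞) • ((gaussMeasure d (-μ)).prod (Measure.dirac (-1 : ℝ)))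

/-- Chi-squared measure with `k` degrees of freedom. -/
def chiSqMeasure (k : ℕ) : Measure ℝ := ProbabilityTheory.gammaMeasure ((k : ℝ) / 2) (1 / 2)



/-! ### Auxiliary lemmas for `m_lower_bound` -/

private lemma aux_cosh_sinh (v : ℝ) (hv : 0 ≤ v) :
    0 ≤ v * Real.cosh v - (1 - v ^ 2 / 3) * Real.sinh v := by
  set f : ℝ → ℝ := fun x => x * Real.cosh x - (1 - x ^ 2 / 3) * Real.sinh x with hf
  have hderiv : ∀ x : ℝ,
      HasDerivAt f (x ^ 2 / 3 * Real.cosh x + 5 * x / 3 * Real.sinh x) x := by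
    intro x
    have h1 : HasDerivAt (fun x : ℝ => x * Real.cosh x)
        (1 * Real.cosh x + x * Real.sinh x) x :=
      (hasDerivAt_id x).mul (Real.hasDerivAt_cosh x)
    have hp : HasDerivAt (fun x : ℝ => 1 - x ^ 2 / 3) (-((2:ℕ) * x ^ 1 / 3)) x :=
      ((hasDerivAt_pow 2 x).div_const 3).const_sub 1
    have h2 := hp.mul (Real.hasDerivAt_sinh x)
    have := h1.sub h2
    refine this.congr_deriv ?_
    push_cast
    ring
  have mono : MonotoneOn f (Set.Ici 0) := by
    apply monotoneOn_of_deriv_nonneg (convex_Ici 0)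
    · exact (Continuous.sub (continuous_id.mul Real.continuous_cosh)
        ((continuous_const.sub ((continuous_pow 2).div_const 3)).mul
          Real.continuous_sinh)).continuousOn
    · intro x hx
      exact (hderiv x).differentiableAt.differentiableWithinAt
    · intro x hx
      rw [interior_Ici] at hx
      rw [(hderiv x).deriv]
      have hx0 : (0:ℝ) ≤ x := (le_of_lt hx)
      have h1 : 0 ≤ Real.sinh x := Real.sinh_nonneg_iff.mpr hx0
      have h2 : 0 < Real.cosh x := Real.cosh_pos x
      positivity
  have h0 : f 0 = 0 := by simp [hf]
  have := mono Set.self_mem_Ici (Set.mem_Ici.mpr hv) hv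
  rw [h0] at this
  simpa [hf] using this

private lemma sinh_lower (u : ℝ) (hu : 0 ≤ u) :
    (u - u ^ 3 / 3) * Real.cosh u ≤ Real.sinh u := by
  set g : ℝ → ℝ := fun x => Real.sinh x - (x - x ^ 3 / 3) * Real.cosh x with hg
  have hderiv : ∀ x : ℝ,
      HasDerivAt g (x ^ 2 * Real.cosh x - (x - x ^ 3 / 3) * Real.sinh x) x := by
    intro x
    have hp : HasDerivAt (fun x : ℝ => x - x ^ 3 / 3) (1 - (3:ℕ) * x ^ 2 / 3) x :=
      (hasDerivAt_id x).sub ((hasDerivAt_pow 3 x).div_const 3)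
    have h2 := hp.mul (Real.hasDerivAt_cosh x)
    have := (Real.hasDerivAt_sinh x).sub h2
    refine this.congr_deriv ?_
    push_cast
    ring
  have mono : MonotoneOn g (Set.Ici 0) := by
    apply monotoneOn_of_deriv_nonneg (convex_Ici 0)
    · exact (Real.continuous_sinh.sub
        ((continuous_id.sub ((continuous_pow 3).div_const 3)).mul
          Real.continuous_cosh)).continuousOn
    · intro x hx
      exact (hderiv x).differentiableAt.differentiableWithinAt
    · intro x hx
      rw [interior_Ici] at hx
      rw [(hderiv x).deriv]
      have hx0 : (0:ℝ) ≤ x := le_of_lt hx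
      have key := aux_cosh_sinh x hx0
      nlinarith [key, hx0]
  have h0 : g 0 = 0 := by simp [hg]
  have := mono Set.self_mem_Ici (Set.mem_Ici.mpr hu) hu
  rw [h0] at this
  simp only [hg] at this
  linarith

private lemma tp_diff_ge (p u : ℝ) (hp : 1 / 2 < p) (hp1 : p < 1) (hu : 0 ≤ u) :
    8 * (p * (1 - p)) * (u - u ^ 3 / 3) ≤ tp p u - tp p (-u) := by
  have hp0 : 0 < p := by linarith
  have h1p : 0 < 1 - p := by linarith
  set E := Real.exp u with hE
  set F := Real.exp (-u) with hFdef
  have hE1 : 1 ≤ E := Real.one_le_exp hu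
  have hF : 0 < F := Real.exp_pos _
  have hEF : E * F = 1 := by rw [hE, hFdef, ← Real.exp_add]; simp
  have hc1 : 0 < p * E + (1 - p) * F := by positivity
  have hc2 : 0 < p * F + (1 - p) * E := by positivity
  have hsinh : (u - u ^ 3 / 3) * ((E + F) / 2) ≤ (E - F) / 2 := by
    have := sinh_lower u hu
    rwa [Real.sinh_eq, Real.cosh_eq] at this
  rw [tp, tp, neg_neg, ← hE, ← hFdef,
    div_sub_div _ _ (ne_of_gt hc1) (ne_of_gt hc2), le_div_iff₀ (mul_pos hc1 hc2)]
  have expand : (p * E - (1 - p) * F) * (p * F + (1 - p) * E)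
      - (p * E + (1 - p) * F) * (p * F - (1 - p) * E)
      = 2 * (p * (1 - p)) * (E ^ 2 - F ^ 2) := by ring
  have expand2 : (p * E + (1 - p) * F) * (p * F + (1 - p) * E)
      = 1 - 2 * (p * (1 - p)) + (p * (1 - p)) * (E ^ 2 + F ^ 2) := by
    linear_combination (1 - 2 * (p * (1 - p))) * hEF
  rw [expand, expand2]
  have hs : 0 < p * (1 - p) := mul_pos hp0 h1p
  have h4s : 0 ≤ 1 - 4 * (p * (1 - p)) := by nlinarith [sq_nonneg (2 * p - 1)]
  rcases le_or_gt (u - u ^ 3 / 3) 0 with hw | hw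
  · have hbr : (2:ℝ) ≤ E ^ 2 + F ^ 2 := by nlinarith [sq_nonneg (E - F)]
    have hFle : F ≤ E := by nlinarith
    nlinarith [mul_nonneg (mul_nonneg hs.le (neg_nonneg.mpr hw)) (by nlinarith : (0:ℝ) ≤ 1 - 2 * (p * (1 - p)) + (p * (1 - p)) * (E ^ 2 + F ^ 2)), mul_nonneg hs.le (mul_nonneg (sub_nonneg.mpr hFle) (by linarith : (0:ℝ) ≤ E + F))]
  · have hsinh2 : (u - u ^ 3 / 3) * (E + F) ≤ E - F := by linarith
    have hEFl : (0:ℝ) ≤ E + F := by linarith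
    have h1 : (u - u ^ 3 / 3) * (E + F) ^ 2 ≤ E ^ 2 - F ^ 2 := by
      nlinarith [mul_le_mul_of_nonneg_right hsinh2 hEFl]
    have hbr : 1 - 2 * (p * (1 - p)) + (p * (1 - p)) * (E ^ 2 + F ^ 2)
        ≤ (E + F) ^ 2 / 4 := by
      nlinarith [mul_nonneg h4s (sq_nonneg (E - F))]
    have hcoef : (0:ℝ) ≤ 8 * (p * (1 - p)) * (u - u ^ 3 / 3) := by
      have := hw.le
      positivity
    calc 8 * (p * (1 - p)) * (u - u ^ 3 / 3)
          * (1 - 2 * (p * (1 - p)) + p * (1 - p) * (E ^ 2 + F ^ 2))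
        ≤ 8 * (p * (1 - p)) * (u - u ^ 3 / 3) * ((E + F) ^ 2 / 4) :=
          mul_le_mul_of_nonneg_left hbr hcoef
      _ = 2 * (p * (1 - p)) * ((u - u ^ 3 / 3) * (E + F) ^ 2) := by ring
      _ ≤ 2 * (p * (1 - p)) * (E ^ 2 - F ^ 2) := by
          exact mul_le_mul_of_nonneg_left h1 (by positivity)

private lemma phi1_nonneg (z : ℝ) : 0 ≤ phi1 z := by
  rw [phi1]; positivity

private lemma phi1_neg_eq (z : ℝ) : phi1 (-z) = phi1 z := by
  simp [phi1, neg_sq]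

private lemma tp_abs_le (p x : ℝ) (hp0 : 0 < p) (hp1 : p < 1) : |tp p x| ≤ 1 := by
  have h1p : 0 < 1 - p := by linarith
  have hA : 0 < p * Real.exp x := by positivity
  have hB : 0 < (1 - p) * Real.exp (-x) := by positivity
  rw [tp, abs_div,
    abs_of_pos (show (0:ℝ) < p * Real.exp x + (1 - p) * Real.exp (-x) by linarith),
    div_le_one (by linarith), abs_le]
  constructor <;> linarith

private lemma tp_continuous (p : ℝ) (hp0 : 0 < p) (hp1 : p < 1) : Continuous (tp p) := by
  have h1p : 0 < 1 - p := by linarith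
  apply Continuous.div
  · fun_prop
  · fun_prop
  · intro x
    have : 0 < p * Real.exp x + (1 - p) * Real.exp (-x) := by positivity
    exact ne_of_gt this

private lemma integrable_pow_gauss (n : ℕ) :
    MeasureTheory.Integrable fun z : ℝ => z ^ n * Real.exp (-(1 / 2) * z ^ 2) := by
  have h := integrable_rpow_mul_exp_neg_mul_sq (b := 1 / 2) (by norm_num)
    (s := (n : ℝ)) (lt_of_lt_of_le (by norm_num) (Nat.cast_nonneg n))
  simpa [Real.rpow_natCast] using h

private lemma integrable_pow_phi (n : ℕ) :
    MeasureTheory.Integrable fun z : ℝ => z ^ n * phi1 z := by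
  have h := (integrable_pow_gauss n).mul_const (Real.sqrt (2 * π))⁻¹
  apply h.congr
  filter_upwards with z
  rw [phi1, show -z ^ 2 / 2 = -(1 / 2) * z ^ 2 by ring]
  ring

private lemma integrable_tp_mul (p a : ℝ) (hp0 : 0 < p) (hp1 : p < 1) :
    MeasureTheory.Integrable fun z : ℝ => tp p (a * z) * z * phi1 z := by
  have hcont : Continuous fun z : ℝ => tp p (a * z) * z * phi1 z := by
    apply Continuous.mul
    · exact (((tp_continuous p hp0 hp1).comp (continuous_const.mul continuous_id)).mul
        continuous_id)
    · rw [show phi1 = fun z : ℝ => Real.exp (-z ^ 2 / 2) / Real.sqrt (2 * π) from rfl]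
      fun_prop
  apply ((integrable_pow_phi 1).abs).mono' hcont.aestronglyMeasurable
  filter_upwards with z
  have h1 := tp_abs_le p (a * z) hp0 hp1
  have h2 := phi1_nonneg z
  rw [Real.norm_eq_abs, abs_mul, abs_mul, pow_one, abs_mul, abs_of_nonneg h2]
  have : |tp p (a * z)| * |z| * phi1 z ≤ 1 * |z| * phi1 z := by
    apply mul_le_mul_of_nonneg_right _ h2
    exact mul_le_mul_of_nonneg_right h1 (abs_nonneg z)
  calc |tp p (a * z)| * |z| * phi1 z ≤ 1 * |z| * phi1 z := this
    _ = |z| * phi1 z := by rw [one_mul]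

private lemma gauss_zero : ∫ z : ℝ, Real.exp (-(1 / 2) * z ^ 2) = Real.sqrt (2 * π) := by
  have h := integral_gaussian (1 / 2 : ℝ)
  rw [show π / (1 / 2 : ℝ) = 2 * π by ring] at h
  exact h

private lemma gauss_rec (n : ℕ) :
    ∫ z : ℝ, z ^ (n + 2) * Real.exp (-(1 / 2) * z ^ 2)
      = (n + 1 : ℝ) * ∫ z : ℝ, z ^ n * Real.exp (-(1 / 2) * z ^ 2) := by
  have hu : ∀ x : ℝ, HasDerivAt (fun x : ℝ => x ^ (n + 1)) (((n : ℝ) + 1) * x ^ n) x := by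
    intro x
    have := hasDerivAt_pow (n + 1) x
    simpa using this
  have hv : ∀ x : ℝ, HasDerivAt (fun x : ℝ => Real.exp (-(1 / 2) * x ^ 2))
      (-x * Real.exp (-(1 / 2) * x ^ 2)) x := by
    intro x
    have h1 : HasDerivAt (fun x : ℝ => -(1 / 2 : ℝ) * x ^ 2) (-x) x := by
      have := (hasDerivAt_pow 2 x).const_mul (-(1 / 2 : ℝ))
      refine this.congr_deriv ?_
      push_cast
      ring
    have := h1.exp
    refine this.congr_deriv ?_
    ring
  have huv' : MeasureTheory.Integrable
      ((fun x : ℝ => x ^ (n + 1)) * fun x : ℝ => -x * Real.exp (-(1 / 2) * x ^ 2)) := by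
    apply ((integrable_pow_gauss (n + 2)).neg).congr
    filter_upwards with x
    simp only [Pi.mul_apply, Pi.neg_apply]
    ring
  have hu'v : MeasureTheory.Integrable
      ((fun x : ℝ => ((n : ℝ) + 1) * x ^ n) * fun x : ℝ => Real.exp (-(1 / 2) * x ^ 2)) := by
    apply ((integrable_pow_gauss n).const_mul ((n : ℝ) + 1)).congr
    filter_upwards with x
    simp only [Pi.mul_apply]
    ring
  have huv : MeasureTheory.Integrable
      ((fun x : ℝ => x ^ (n + 1)) * fun x : ℝ => Real.exp (-(1 / 2) * x ^ 2)) := by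
    apply (integrable_pow_gauss (n + 1)).congr
    filter_upwards with x
    simp only [Pi.mul_apply]
  have ibp := MeasureTheory.integral_mul_deriv_eq_deriv_mul_of_integrable
    (fun x _ => hu x) (fun x _ => hv x) huv' hu'v huv
  have hL : ∫ x : ℝ, x ^ (n + 1) * (-x * Real.exp (-(1 / 2) * x ^ 2))
      = -∫ x : ℝ, x ^ (n + 2) * Real.exp (-(1 / 2) * x ^ 2) := by
    rw [← MeasureTheory.integral_neg]
    congr 1
    funext x
    ring
  have hR : ∫ x : ℝ, ((n : ℝ) + 1) * x ^ n * Real.exp (-(1 / 2) * x ^ 2)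
      = ((n : ℝ) + 1) * ∫ x : ℝ, x ^ n * Real.exp (-(1 / 2) * x ^ 2) := by
    rw [← MeasureTheory.integral_const_mul]
    congr 1
    funext x
    ring
  rw [hL, hR] at ibp
  push_cast
  linarith

private lemma integral_phi_sq : ∫ z : ℝ, z ^ 2 * phi1 z = 1 := by
  have hpos : 0 < Real.sqrt (2 * π) := Real.sqrt_pos.mpr (by positivity)
  have heq : (fun z : ℝ => z ^ 2 * phi1 z)
      = fun z : ℝ => z ^ 2 * Real.exp (-(1 / 2) * z ^ 2) * (Real.sqrt (2 * π))⁻¹ := by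
    funext z
    rw [phi1, show -z ^ 2 / 2 = -(1 / 2) * z ^ 2 by ring]
    ring
  rw [heq, MeasureTheory.integral_mul_const, gauss_rec 0]
  have h0 : ∫ z : ℝ, z ^ 0 * Real.exp (-(1 / 2) * z ^ 2) = Real.sqrt (2 * π) := by
    rw [← gauss_zero]
    congr 1
    funext z
    rw [pow_zero, one_mul]
  rw [h0]
  field_simp
  simp

private lemma integral_phi_four : ∫ z : ℝ, z ^ 4 * phi1 z = 3 := by
  have hpos : 0 < Real.sqrt (2 * π) := Real.sqrt_pos.mpr (by positivity)
  have heq : (fun z : ℝ => z ^ 4 * phi1 z)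
      = fun z : ℝ => z ^ 4 * Real.exp (-(1 / 2) * z ^ 2) * (Real.sqrt (2 * π))⁻¹ := by
    funext z
    rw [phi1, show -z ^ 2 / 2 = -(1 / 2) * z ^ 2 by ring]
    ring
  rw [heq, MeasureTheory.integral_mul_const, gauss_rec 2, gauss_rec 0]
  have h0 : ∫ z : ℝ, z ^ 0 * Real.exp (-(1 / 2) * z ^ 2) = Real.sqrt (2 * π) := by
    rw [← gauss_zero]
    congr 1
    funext z
    rw [pow_zero, one_mul]
  rw [h0]
  field_simp
  ring

private lemma point_bound (p a z : ℝ) (hp : 1 / 2 < p) (hp1 : p < 1) (ha : 0 ≤ a) :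
    2 * (4 * (p * (1 - p))) * (a * z ^ 2 - a ^ 3 * z ^ 4 / 3) * phi1 z
      ≤ (tp p (a * z) - tp p (-(a * z))) * z * phi1 z := by
  have hphi := phi1_nonneg z
  rcases le_total 0 z with hz | hz
  · have key := tp_diff_ge p (a * z) hp hp1 (mul_nonneg ha hz)
    have h2 : 8 * (p * (1 - p)) * (a * z - (a * z) ^ 3 / 3) * z
        ≤ (tp p (a * z) - tp p (-(a * z))) * z :=
      mul_le_mul_of_nonneg_right key hz
    calc 2 * (4 * (p * (1 - p))) * (a * z ^ 2 - a ^ 3 * z ^ 4 / 3) * phi1 z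
        = 8 * (p * (1 - p)) * (a * z - (a * z) ^ 3 / 3) * z * phi1 z := by ring
      _ ≤ (tp p (a * z) - tp p (-(a * z))) * z * phi1 z :=
          mul_le_mul_of_nonneg_right h2 hphi
  · have key := tp_diff_ge p (a * (-z)) hp hp1 (mul_nonneg ha (neg_nonneg.mpr hz))
    have h2 : 8 * (p * (1 - p)) * (a * (-z) - (a * (-z)) ^ 3 / 3) * (-z)
        ≤ (tp p (a * (-z)) - tp p (-(a * (-z)))) * (-z) :=
      mul_le_mul_of_nonneg_right key (neg_nonneg.mpr hz)
    calc 2 * (4 * (p * (1 - p))) * (a * z ^ 2 - a ^ 3 * z ^ 4 / 3) * phi1 z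
        = 8 * (p * (1 - p)) * (a * (-z) - (a * (-z)) ^ 3 / 3) * (-z) * phi1 z := by ring
      _ ≤ (tp p (a * (-z)) - tp p (-(a * (-z)))) * (-z) * phi1 z :=
          mul_le_mul_of_nonneg_right h2 hphi
      _ = (tp p (a * z) - tp p (-(a * z))) * z * phi1 z := by
          rw [show a * -z = -(a * z) from by ring, neg_neg]
          ring

private lemma m_key_bound (p a : ℝ) (hp : 1 / 2 < p) (hp1 : p < 1) (ha : 0 ≤ a) :
    4 * (p * (1 - p)) * (a - a ^ 3) ≤ ∫ z : ℝ, tp p (a * z) * z * phi1 z := by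
  have hp0 : 0 < p := by linarith
  set F : ℝ → ℝ := fun z => tp p (a * z) * z * phi1 z with hF
  have hFi : MeasureTheory.Integrable F := integrable_tp_mul p a hp0 hp1
  have hFni : MeasureTheory.Integrable fun z => F (-z) := hFi.comp_neg
  have hsum : MeasureTheory.Integrable fun z => F z + F (-z) := hFi.add hFni
  have hsym : ∫ z : ℝ, F z + F (-z) = 2 * ∫ z : ℝ, F z := by
    rw [MeasureTheory.integral_add hFi hFni, MeasureTheory.integral_neg_eq_self]
    ring
  have hgi : MeasureTheory.Integrable
      (fun z : ℝ => 2 * (4 * (p * (1 - p))) * (a * z ^ 2 - a ^ 3 * z ^ 4 / 3) * phi1 z) := by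
    have h2 := (integrable_pow_phi 2).const_mul (2 * (4 * (p * (1 - p))) * a)
    have h4 := (integrable_pow_phi 4).const_mul (2 * (4 * (p * (1 - p))) * (a ^ 3 / 3))
    apply (h2.sub h4).congr
    filter_upwards with z
    simp only [Pi.sub_apply]
    ring
  have hpoint : ∀ z : ℝ,
      2 * (4 * (p * (1 - p))) * (a * z ^ 2 - a ^ 3 * z ^ 4 / 3) * phi1 z
        ≤ F z + F (-z) := by
    intro z
    have heq : F z + F (-z) = (tp p (a * z) - tp p (-(a * z))) * z * phi1 z := by
      simp only [hF]
      rw [phi1_neg_eq, mul_neg]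
      ring
    rw [heq]
    exact point_bound p a z hp hp1 ha
  have hmono := MeasureTheory.integral_mono hgi hsum hpoint
  have hcalc : ∫ z : ℝ, 2 * (4 * (p * (1 - p))) * (a * z ^ 2 - a ^ 3 * z ^ 4 / 3) * phi1 z
      = 2 * (4 * (p * (1 - p))) * (a - a ^ 3) := by
    have heq : (fun z : ℝ => 2 * (4 * (p * (1 - p))) * (a * z ^ 2 - a ^ 3 * z ^ 4 / 3) * phi1 z)
        = fun z : ℝ => (2 * (4 * (p * (1 - p))) * a) * (z ^ 2 * phi1 z)
            - (2 * (4 * (p * (1 - p))) * (a ^ 3 / 3)) * (z ^ 4 * phi1 z) := by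
      funext z
      ring
    rw [heq, MeasureTheory.integral_sub
        ((integrable_pow_phi 2).const_mul _) ((integrable_pow_phi 4).const_mul _),
      MeasureTheory.integral_const_mul, MeasureTheory.integral_const_mul,
      integral_phi_sq, integral_phi_four]
    ring
  rw [hcalc, hsym] at hmono
  linarith

set_option maxHeartbeats 1000000 in
/-- lower bound for `m(θ)` near the origin. -/
theorem m_lower_bound
    (p : ℝ) (hp : p ∈ Set.Ioo (1 / 2 : ℝ) 1) (d : ℕ) (hd : 1 ≤ d)
    (θ : ℝ) (hθ : θ ∈ Set.Icc (0 : ℝ) (1 / (Real.sqrt 2 + 1 / (Real.sqrt 2 * d)))) :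
    m p d θ ≥ 4 * p * (1 - p) * (1 - 4 * θ ^ 2 / (1 - θ ^ 2 / d) ^ 2) * θ := by
  obtain ⟨hp1, hp2⟩ := hp
  obtain ⟨hθ0, hθ1⟩ := hθ
  have hd1 : (1 : ℝ) ≤ (d : ℝ) := by exact_mod_cast hd
  have hd0 : (0 : ℝ) < (d : ℝ) := by linarith
  have hS0 : (0 : ℝ) < Real.sqrt 2 := Real.sqrt_pos.mpr (by norm_num)
  have hS2 : Real.sqrt 2 ^ 2 = 2 := Real.sq_sqrt (by norm_num)
  have hS1 : 1 ≤ Real.sqrt 2 := by nlinarith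
  have hSd : 0 < Real.sqrt 2 + 1 / (Real.sqrt 2 * d) := by positivity
  have hθD : θ * (Real.sqrt 2 + 1 / (Real.sqrt 2 * d)) ≤ 1 := by
    rw [← le_div_iff₀ hSd]
    exact hθ1
  have hθS : θ * Real.sqrt 2 ≤ 1 := by
    have h1 : θ * Real.sqrt 2 ≤ θ * (Real.sqrt 2 + 1 / (Real.sqrt 2 * d)) := by
      apply mul_le_mul_of_nonneg_left _ hθ0
      have : 0 < 1 / (Real.sqrt 2 * d) := by positivity
      linarith
    linarith
  have hθhalf : θ ^ 2 ≤ 1 / 2 := by nlinarith [mul_nonneg hθ0 hS0.le]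
  have hcle : θ ^ 2 / (d : ℝ) ≤ 1 / 2 := by
    calc θ ^ 2 / (d : ℝ) ≤ θ ^ 2 / 1 := by
          apply div_le_div_of_nonneg_left (sq_nonneg θ) (by norm_num) hd1
      _ ≤ 1 / 2 := by simpa using hθhalf
  have hc0 : 0 < 1 - θ ^ 2 / (d : ℝ) := by linarith
  have hθc : θ ≤ 1 - θ ^ 2 / (d : ℝ) := by
    have h1 : θ ^ 2 * Real.sqrt 2 ≤ θ := by nlinarith [hθS, hθ0]
    have h2 : θ ^ 2 / (d : ℝ) ≤ θ / (Real.sqrt 2 * d) := by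
      rw [div_le_div_iff₀ hd0 (by positivity)]
      calc θ ^ 2 * (Real.sqrt 2 * d) = (θ ^ 2 * Real.sqrt 2) * d := by ring
        _ ≤ θ * d := mul_le_mul_of_nonneg_right h1 hd0.le
    have h3 : θ ≤ θ * Real.sqrt 2 := by nlinarith [hθ0]
    have h4 : θ * Real.sqrt 2 + θ / (Real.sqrt 2 * d) ≤ 1 := by
      have : θ * Real.sqrt 2 + θ / (Real.sqrt 2 * d)
          = θ * (Real.sqrt 2 + 1 / (Real.sqrt 2 * d)) := by ring
      linarith [hθD, this.ge, this.le]
    linarith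
  set c : ℝ := 1 - θ ^ 2 / (d : ℝ) with hc
  set a : ℝ := θ / c with haa
  have ha0 : 0 ≤ a := div_nonneg hθ0 hc0.le
  have ha1 : a ≤ 1 := by
    rw [haa, div_le_one hc0]
    exact hθc
  have hcle1 : c ≤ 1 := by
    rw [hc]
    have : 0 ≤ θ ^ 2 / (d : ℝ) := by positivity
    linarith
  have hθa : θ ≤ a := by
    rw [haa, le_div_iff₀ hc0]
    nlinarith [hθ0]
  have hm : m p d θ = ∫ z : ℝ, tp p (a * z) * z * phi1 z := by
    rw [m, gexp]
    congr 1
    funext z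
    rw [show θ * z / (1 - θ ^ 2 / (d : ℝ)) = a * z by rw [haa, hc]; ring]
  have key := m_key_bound p a hp1 hp2 ha0
  have haθ : θ ^ 2 / c ^ 2 = a ^ 2 := by rw [haa, div_pow]
  have hfin : 4 * p * (1 - p) * (1 - 4 * θ ^ 2 / c ^ 2) * θ
      ≤ 4 * (p * (1 - p)) * (a - a ^ 3) := by
    have hs : 0 < p * (1 - p) := by nlinarith
    rw [show 4 * θ ^ 2 / c ^ 2 = 4 * (θ ^ 2 / c ^ 2) by ring, haθ]
    rcases le_or_gt (4 * a ^ 2) 1 with h | h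
    · nlinarith [mul_nonneg (sub_nonneg.mpr hθa) (sub_nonneg.mpr h),
        pow_nonneg ha0 3]
    · nlinarith [mul_nonneg hθ0 (by linarith : (0:ℝ) ≤ 4 * a ^ 2 - 1),
        mul_nonneg (mul_nonneg ha0 (sub_nonneg.mpr ha1)) (by linarith : (0:ℝ) ≤ 1 + a)]
  rw [ge_iff_le, hm]
  linarith


end OMDA
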